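/- Let m ≥ 2 be an integer with m ≡ 4 (mod 6), let f(x) = x^m on ℤ_3, and let t = ν_3(m − 1). For each integer l ≥ 0, each i ∈ {1, 2}, and each a ∈ {0, 1, …, 3^(t−1) − 1}, set M_{l,a,i} = 1 + 3^(l+1)·i + 3^(l+2)·a + 3^(t+l+1)ℤ_3. Then the sets M_{l,a,i} are pairwise disjoint clopen subsets of ℤ_3, each M_{l,a,i} is a minimal component of f (f(M_{l,a,i}) ⊆ M_{l,a,i} and every forward orbit of f in M_{l,a,i} is dense in M_{l,a,i}), the union of all the M_{l,a,i} together with {1} equals the ball 1 + 3ℤ_3, and moreover f maps the ball 2 + 3ℤ_3 into 1 + 3ℤ_3. -/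

import Mathlib

/-!
Cubing raises the 3-adic valuation of `x - 1` by exactly one when `x ≡ 1 (mod 3)`, so for
`v₃(x - 1) = l + 1` and `v₃(m - 1) = t` the element `x^(3^t)` has `v₃(x^(3^t) - 1) = t + l + 1`,
and its powers are dense in `1 + 3^(t+l+1) ℤ_3`. Likewise the powers of `m` are dense in
`1 + 3^t ℤ_3`, and `x^e` depends continuously on `e` for the 3-adic topology, so the orbit
`x^(m^n)` comes arbitrarily close to every `x^(1 + 3^t j) = x (x^(3^t))^j`, hence is dense in
`x + 3^(t+l+1) ℤ_3`. The sets `M_{l,a,i}` are precisely the balls of that radius in the shell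
`v₃(x - 1) = l + 1`. Finally `m` is even, so `x ≡ -1 (mod 3)` gives `x^m ≡ 1`.
-/

theorem Even.dvd_pow_sub_one_of_dvd_add_one {R : Type*} [CommRing R] {a x : R} {m : ℕ}
    (hm : Even m) (hx : a ∣ x + 1) : a ∣ x ^ m - 1 := by
  obtain ⟨k, rfl⟩ := hm
  rw [← two_mul, pow_mul]
  exact (hx.trans ⟨x - 1, by ring⟩).trans (sub_one_dvd_pow_sub_one _ k)

theorem Nat.exists_eq_pow_padicValNat_mul_not_dvd {p n : ℕ} (hp : p.Prime) (hn : n ≠ 0) :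
    ∃ q, n = p ^ padicValNat p n * q ∧ ¬p ∣ q :=
  ⟨ordCompl[p] n, by rw [← Nat.factorization_def _ hp, Nat.ordProj_mul_ordCompl_eq_self],
    Nat.not_dvd_ordCompl hp hn⟩

namespace PadicInt

variable {p : ℕ} [Fact p.Prime]

theorem pow_dvd_iff_norm_le (z : ℤ_[p]) (k : ℕ) :
    (p : ℤ_[p]) ^ k ∣ z ↔ ‖z‖ ≤ (p : ℝ) ^ (-k : ℤ) := by
  rw [norm_le_pow_iff_mem_span_pow, Ideal.mem_span_singleton]

theorem isUnit_iff_not_dvd {z : ℤ_[p]} : IsUnit z ↔ ¬(p : ℤ_[p]) ∣ z := by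
  rw [isUnit_iff, ← norm_lt_one_iff_dvd, not_lt]
  exact ⟨fun h => h.ge, (norm_le_one z).antisymm⟩

theorem isUnit_of_dvd_sub_one {z : ℤ_[p]} (hz : (p : ℤ_[p]) ∣ z - 1) : IsUnit z :=
  isUnit_iff_not_dvd.2 fun h => prime_p.not_dvd_one ((dvd_sub_right h).1 hz)

theorem valuation_pow_mul_of_not_dvd {w : ℤ_[p]} (hw : ¬(p : ℤ_[p]) ∣ w) (s : ℕ) :
    ((p : ℤ_[p]) ^ s * w).valuation = s := by
  have hw0 : w ≠ 0 := by rintro rfl; exact hw (dvd_zero _)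
  have hv : ¬1 ≤ w.valuation := by
    rwa [← mem_span_pow_iff_le_valuation w hw0 1, Ideal.mem_span_singleton, pow_one]
  rw [valuation_p_pow_mul _ _ hw0]
  omega

theorem isClopen_setOf_pow_dvd_sub (c : ℤ_[p]) (k : ℕ) :
    IsClopen {x : ℤ_[p] | (p : ℤ_[p]) ^ k ∣ x - c} := by
  convert IsUltrametricDist.isClopen_closedBall c (r := (p : ℝ) ^ (-k : ℤ))
    (zpow_ne_zero _ (Nat.cast_ne_zero.2 (Fact.out : p.Prime).ne_zero))
  ext x
  rw [Set.mem_ofPred_eq, Metric.mem_closedBall, dist_eq_norm, pow_dvd_iff_norm_le]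

theorem mem_closure_of_forall_pow_dvd_sub {S : Set ℤ_[p]} {y : ℤ_[p]}
    (h : ∀ k : ℕ, ∃ z ∈ S, (p : ℤ_[p]) ^ k ∣ z - y) : y ∈ closure S := by
  rw [Metric.mem_closure_iff]
  intro ε hε
  obtain ⟨k, hk⟩ := exists_pow_lt_of_lt_one hε
    (inv_lt_one_of_one_lt₀ (Nat.one_lt_cast.2 (Fact.out : p.Prime).one_lt))
  obtain ⟨z, hz, hzy⟩ := h k
  refine ⟨z, hz, ?_⟩
  rw [dist_comm, dist_eq_norm]
  calc ‖z - y‖ ≤ (p : ℝ) ^ (-k : ℤ) := (pow_dvd_iff_norm_le _ _).1 hzy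
    _ = (p : ℝ)⁻¹ ^ k := by rw [zpow_neg, zpow_natCast, inv_pow]
    _ < ε := hk

theorem exists_natCast_lt_pow_dvd_sub (z : ℤ_[p]) (k : ℕ) :
    ∃ c < p ^ k, (p : ℤ_[p]) ^ k ∣ z - c :=
  ⟨z.appr k, appr_lt z k, Ideal.mem_span_singleton.1 (appr_spec k z)⟩

theorem exists_eq_pow_mul_not_dvd {z : ℤ_[p]} (hz : z ≠ 0) :
    ∃ (s : ℕ) (w : ℤ_[p]), z = p ^ s * w ∧ ¬(p : ℤ_[p]) ∣ w :=
  ⟨z.valuation, unitCoeff hz, by rw [mul_comm]; exact unitCoeff_spec hz,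
    isUnit_iff_not_dvd.1 (Units.isUnit _)⟩

theorem pow_dvd_natCast_sub_natCast_iff {k A B : ℕ} :
    (p : ℤ_[p]) ^ k ∣ (A : ℤ_[p]) - B ↔ A ≡ B [MOD p ^ k] := by
  rw [← Int.natCast_modEq_iff, Int.modEq_iff_dvd, Nat.cast_pow, ← pow_p_dvd_int_iff, dvd_sub_comm]
  push_cast
  rfl

theorem pow_dvd_natCast_iff {k n : ℕ} : (p : ℤ_[p]) ^ k ∣ (n : ℤ_[p]) ↔ p ^ k ∣ n := by
  simpa [Nat.modEq_zero_iff_dvd] using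
    pow_dvd_natCast_sub_natCast_iff (p := p) (k := k) (A := n) (B := 0)

theorem exists_natCast_mul_add_dvd {w : ℤ_[p]} (hw : ¬(p : ℤ_[p]) ∣ w) (d : ℤ_[p]) :
    ∃ c : ℕ, (p : ℤ_[p]) ∣ d + c * w := by
  obtain ⟨v, hv⟩ := (isUnit_iff_not_dvd.2 hw).exists_right_inv
  obtain ⟨c, -, e, he⟩ := exists_natCast_lt_pow_dvd_sub (-d * v) 1
  exact ⟨c, -(w * e), by linear_combination (-w) * he + (-d) * hv⟩

end PadicInt

namespace Z3Monomial

open PadicInt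

theorem one_add_three_pow_mul_pow_three {s : ℕ} (hs : 1 ≤ s) (w : ℤ_[3]) :
    ∃ w', (1 + 3 ^ s * w) ^ 3 = 1 + 3 ^ (s + 1) * w' ∧ (3 : ℤ_[3]) ∣ w' - w := by
  obtain ⟨s, rfl⟩ := Nat.exists_eq_add_of_le' hs
  exact ⟨w + 3 ^ (s + 1) * w ^ 2 + 3 ^ (2 * s + 1) * w ^ 3, by ring,
    3 ^ s * w ^ 2 + 3 ^ (2 * s) * w ^ 3, by ring⟩

theorem one_add_three_pow_mul_pow_three_pow {s : ℕ} (hs : 1 ≤ s) (w : ℤ_[3]) (k : ℕ) :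
    ∃ w', (1 + 3 ^ s * w) ^ 3 ^ k = 1 + 3 ^ (s + k) * w' ∧ (3 : ℤ_[3]) ∣ w' - w := by
  induction k with
  | zero => exact ⟨w, by simp, by simp⟩
  | succ k ih =>
    obtain ⟨w₁, h₁, hw₁⟩ := ih
    obtain ⟨w₂, h₂, hw₂⟩ := one_add_three_pow_mul_pow_three (by omega : 1 ≤ s + k) w₁
    refine ⟨w₂, by rw [pow_succ, pow_mul, h₁, h₂, add_assoc], ?_⟩
    simpa using dvd_add hw₂ hw₁

theorem three_pow_add_dvd_pow_sub_pow {s k A B : ℕ} {x : ℤ_[3]} (hs : 1 ≤ s)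
    (hx : (3 : ℤ_[3]) ^ s ∣ x - 1) (h : A ≡ B [MOD 3 ^ k]) :
    (3 : ℤ_[3]) ^ (s + k) ∣ x ^ A - x ^ B := by
  wlog hBA : B ≤ A generalizing A B
  · simpa [dvd_sub_comm] using this h.symm (by omega)
  obtain ⟨w, hw⟩ := hx
  obtain ⟨w', hpow, -⟩ := one_add_three_pow_mul_pow_three_pow hs w k
  have hx' : (3 : ℤ_[3]) ^ (s + k) ∣ x ^ 3 ^ k - 1 :=
    ⟨w', by rw [eq_add_of_sub_eq' hw, hpow]; ring⟩
  have hsplit : x ^ A - x ^ B = x ^ B * (x ^ (A - B) - 1) := by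
    rw [mul_sub, ← pow_add, Nat.add_sub_cancel' hBA, mul_one]
  obtain ⟨e, he⟩ := (Nat.modEq_iff_dvd' hBA).1 h.symm
  rw [hsplit, he]
  exact (hx'.trans (pow_one_sub_dvd_pow_mul_sub_one x _ e)).mul_left _

theorem exists_pow_sub_dvd {s : ℕ} {w u : ℤ_[3]} (hs : 1 ≤ s) (hw : ¬(3 : ℤ_[3]) ∣ w)
    (hu : (3 : ℤ_[3]) ^ s ∣ u - 1) (k : ℕ) :
    ∃ j : ℕ, (3 : ℤ_[3]) ^ k ∣ (1 + 3 ^ s * w) ^ j - u := by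
  induction k with
  | zero => exact ⟨0, by simp⟩
  | succ k ih =>
    rcases lt_or_ge k s with hks | hks
    · exact ⟨0, (pow_dvd_pow 3 hks).trans (by simpa [dvd_sub_comm] using hu)⟩
    obtain ⟨j, d, hd⟩ := ih
    -- `h = g^(3^(k-s)) = 1 + 3^k w'` with `3 ∤ w'`, and `h^c ≡ 1 + 3^k c w' (mod 3^(k+1))`:
    -- multiplying by a suitable `h^c` kills the digit `d` of `g^j - u` at `3^k`.
    obtain ⟨w', hh, hw'⟩ := one_add_three_pow_mul_pow_three_pow hs w (k - s)
    rw [Nat.add_sub_cancel' hks] at hh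
    obtain ⟨c, e, hc⟩ := exists_natCast_mul_add_dvd (p := 3) (w := w')
      (by simpa [dvd_iff_dvd_of_dvd_sub hw'] using hw) d
    obtain ⟨f, hf⟩ := sq_dvd_add_pow_sub_sub (3 ^ k * w') 1 c
    obtain ⟨v, hv⟩ := (dvd_pow_self 3 (by omega : s ≠ 0)).trans hu
    obtain ⟨K, rfl⟩ := Nat.exists_eq_add_of_le' (hs.trans hks)
    refine ⟨j + 3 ^ (K + 1 - s) * c, e + c * w' * v + 3 ^ K * (u * w' ^ 2 * f + d * w' * c
      + 3 ^ (K + 1) * d * w' ^ 2 * f), ?_⟩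
    rw [pow_add, pow_mul, hh]
    simp only [one_pow, one_mul, Nat.cast_ofNat] at hf hc
    linear_combination (1 + 3 ^ (K + 1) * w') ^ c * hd + (u + 3 ^ (K + 1) * d) * hf
      + 3 ^ (K + 1) * hc + 3 ^ (K + 1) * c * w' * hv

theorem three_dvd_natCast_iff {n : ℕ} : (3 : ℤ_[3]) ∣ n ↔ 3 ∣ n := by
  simpa using pow_dvd_natCast_iff (p := 3) (k := 1) (n := n)

-- The paper's `M_{l,a,i}` is `component (l + 1) t (i + 3 * a)`.
def component (s t r : ℕ) : Set ℤ_[3] :=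
  {x | (3 : ℤ_[3]) ^ (s + t) ∣ x - (1 + 3 ^ s * r)}

variable {s t r : ℕ} {x : ℤ_[3]}

theorem mem_component_iff :
    x ∈ component s t r ↔ ∃ w, x = 1 + 3 ^ s * w ∧ (3 : ℤ_[3]) ^ t ∣ w - r := by
  rw [component, Set.mem_ofPred_eq, pow_add]
  constructor
  · rintro ⟨e, he⟩
    exact ⟨r + 3 ^ t * e, by linear_combination he, e, by ring⟩
  · rintro ⟨w, rfl, e, he⟩
    exact ⟨e, by linear_combination 3 ^ s * he⟩

theorem exists_eq_of_mem_component (ht : 1 ≤ t) (hr : ¬3 ∣ r) (hx : x ∈ component s t r) :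
    ∃ w, x = 1 + 3 ^ s * w ∧ ¬(3 : ℤ_[3]) ∣ w := by
  obtain ⟨w, hxw, hw⟩ := mem_component_iff.1 hx
  refine ⟨w, hxw, ?_⟩
  rwa [dvd_iff_dvd_of_dvd_sub ((dvd_pow_self 3 (by omega)).trans hw), three_dvd_natCast_iff]

theorem pow_dvd_sub_one_of_mem_component (hx : x ∈ component s t r) :
    (3 : ℤ_[3]) ^ s ∣ x - 1 := by
  obtain ⟨w, rfl, -⟩ := mem_component_iff.1 hx
  exact ⟨w, by ring⟩

theorem isClopen_component : IsClopen (component s t r) := by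
  simpa [component] using isClopen_setOf_pow_dvd_sub (p := 3) (1 + 3 ^ s * r) (s + t)

theorem pow_mem_component {m : ℕ} (hs : 1 ≤ s) (hm : m ≡ 1 [MOD 3 ^ t])
    (hx : x ∈ component s t r) : x ^ m ∈ component s t r := by
  have hxm := three_pow_add_dvd_pow_sub_pow hs (pow_dvd_sub_one_of_mem_component hx) hm
  rw [pow_one] at hxm
  simpa [component] using dvd_add hxm hx

theorem component_subset_closure_orbit {q : ℕ} (hs : 1 ≤ s) (ht : 1 ≤ t) (hq : ¬3 ∣ q)
    (hr : ¬3 ∣ r) (hx : x ∈ component s t r) :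
    component s t r ⊆ closure (Set.range fun n : ℕ => x ^ (3 ^ t * q + 1) ^ n) := by
  intro y hy
  obtain ⟨w, hxw, hw⟩ := exists_eq_of_mem_component ht hr hx
  have hx1 := pow_dvd_sub_one_of_mem_component hx
  obtain ⟨w', hg, hw'⟩ := one_add_three_pow_mul_pow_three_pow hs w t
  rw [← hxw] at hg
  obtain ⟨x', hxx'⟩ := (isUnit_of_dvd_sub_one (p := 3)
    (by simpa using (dvd_pow_self 3 (by omega)).trans hx1)).exists_right_inv
  have hyx : (3 : ℤ_[3]) ^ (s + t) ∣ y * x' - 1 := by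
    have := (dvd_sub hy hx).mul_right x'
    rwa [sub_sub_sub_cancel_right, sub_mul, hxx'] at this
  refine mem_closure_of_forall_pow_dvd_sub fun k => ?_
  obtain ⟨j, hj⟩ := exists_pow_sub_dvd (by omega) (by rwa [dvd_iff_dvd_of_dvd_sub hw']) hyx k
  obtain ⟨n, hn⟩ := exists_pow_sub_dvd (w := (q : ℤ_[3])) (u := ((3 ^ t * j + 1 : ℕ) : ℤ_[3]))
    ht (three_dvd_natCast_iff.not.2 hq) ⟨j, by push_cast; ring⟩ k
  have hmn : (3 ^ t * q + 1) ^ n ≡ 3 ^ t * j + 1 [MOD 3 ^ k] := by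
    rw [← pow_dvd_natCast_sub_natCast_iff (p := 3)]
    simpa [add_comm] using hn
  have hxmn := three_pow_add_dvd_pow_sub_pow hs hx1 hmn
  refine ⟨_, ⟨n, rfl⟩, ?_⟩
  have hsplit : x ^ (3 ^ t * q + 1) ^ n - y = (x ^ (3 ^ t * q + 1) ^ n - x ^ (3 ^ t * j + 1))
      + x * ((1 + 3 ^ (s + t) * w') ^ j - y * x') := by
    rw [pow_succ, pow_mul, hg]
    linear_combination y * hxx'
  rw [hsplit, Nat.cast_ofNat]
  exact dvd_add ((pow_dvd_pow 3 (by omega)).trans hxmn) (hj.mul_left x)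

theorem disjoint_component {s' r' : ℕ} (ht : 1 ≤ t) (hr : ¬3 ∣ r) (hr' : ¬3 ∣ r')
    (hrt : r < 3 ^ t) (hrt' : r' < 3 ^ t) (hne : (s, r) ≠ (s', r')) :
    Disjoint (component s t r) (component s' t r') := by
  rw [Set.disjoint_left]
  intro x hx hx'
  obtain ⟨w, hxw, hw⟩ := exists_eq_of_mem_component ht hr hx
  obtain ⟨w', hxw', hw'⟩ := exists_eq_of_mem_component ht hr' hx'
  have hss : s = s' := by
    have h := valuation_pow_mul_of_not_dvd (p := 3) (by simpa using hw) s
    have h' := valuation_pow_mul_of_not_dvd (p := 3) (by simpa using hw') s'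
    simp only [Nat.cast_ofNat] at h h'
    rw [← h, ← h', add_left_cancel (hxw.symm.trans hxw')]
  subst hss
  refine hne (Prod.ext rfl (Nat.ModEq.eq_of_lt_of_lt ?_ hrt hrt'))
  rw [← pow_dvd_natCast_sub_natCast_iff (p := 3), Nat.cast_ofNat,
    ← mul_dvd_mul_iff_left (pow_ne_zero s (by norm_num : (3 : ℤ_[3]) ≠ 0)), ← pow_add]
  have := dvd_sub hx' hx
  rwa [sub_sub_sub_cancel_left, show (1 + 3 ^ s * (r : ℤ_[3])) - (1 + 3 ^ s * r') =
    3 ^ s * (r - r') by ring] at this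

theorem exists_mem_component (ht : 1 ≤ t) (hx : (3 : ℤ_[3]) ∣ x - 1) (hx1 : x ≠ 1) :
    ∃ s r, 1 ≤ s ∧ r < 3 ^ t ∧ ¬3 ∣ r ∧ x ∈ component s t r := by
  obtain ⟨s, w, hxw, hw⟩ := exists_eq_pow_mul_not_dvd (p := 3) (sub_ne_zero.2 hx1)
  obtain ⟨r, hrt, hwr⟩ := exists_natCast_lt_pow_dvd_sub (p := 3) w t
  simp only [Nat.cast_ofNat] at hxw hw hwr
  refine ⟨s, r, Nat.one_le_iff_ne_zero.2 ?_, hrt, ?_,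
    mem_component_iff.2 ⟨w, by linear_combination hxw, hwr⟩⟩
  · rintro rfl
    exact hw (by simpa [hxw] using hx)
  · rwa [← three_dvd_natCast_iff, ← dvd_iff_dvd_of_dvd_sub ((dvd_pow_self 3 (by omega)).trans hwr)]

theorem setOf_dvd_sub_eq_component (t l a i : ℕ) :
    {x : ℤ_[3] | (3 : ℤ_[3]) ^ (t + l + 1) ∣
      x - (1 + 3 ^ (l + 1) * (i : ℤ_[3]) + 3 ^ (l + 2) * (a : ℤ_[3]))} =
      component (l + 1) t (i + 3 * a) := by
  rw [component, show t + l + 1 = l + 1 + t by ring,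
    show 1 + 3 ^ (l + 1) * (i : ℤ_[3]) + 3 ^ (l + 2) * (a : ℤ_[3]) =
      1 + 3 ^ (l + 1) * ((i + 3 * a : ℕ) : ℤ_[3]) by push_cast; ring]

theorem lt_three_pow_and_not_dvd_add_three_mul {a i : ℕ} (ht : 1 ≤ t) (ha : a < 3 ^ (t - 1))
    (hi : i = 1 ∨ i = 2) : i + 3 * a < 3 ^ t ∧ ¬3 ∣ i + 3 * a := by
  have h3 : 3 ^ t = 3 * 3 ^ (t - 1) := by rw [← pow_succ', Nat.sub_add_cancel ht]
  omega

theorem iUnion_component_union_one (ht : 1 ≤ t) :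
    (⋃ l : ℕ, ⋃ a ∈ Finset.range (3 ^ (t - 1)), ⋃ i ∈ ({1, 2} : Set ℕ),
      component (l + 1) t (i + 3 * a)) ∪ {1} = {x : ℤ_[3] | (3 : ℤ_[3]) ∣ x - 1} := by
  ext x
  simp only [Set.mem_union, Set.mem_iUnion, Finset.mem_range, Set.mem_insert_iff,
    Set.mem_singleton_iff, exists_prop, Set.mem_ofPred_eq]
  constructor
  · rintro (⟨l, a, -, i, -, hx⟩ | rfl)
    · exact (dvd_pow_self 3 l.succ_ne_zero).trans (pow_dvd_sub_one_of_mem_component hx)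
    · simp
  · intro hx
    by_cases hx1 : x = 1
    · exact Or.inr hx1
    obtain ⟨s, r, hs, hrt, hr, hxs⟩ := exists_mem_component ht hx hx1
    have h3 : 3 ^ t = 3 * 3 ^ (t - 1) := by rw [← pow_succ', Nat.sub_add_cancel ht]
    refine Or.inl ⟨s - 1, r / 3, by omega, r % 3, by omega, ?_⟩
    rwa [Nat.sub_add_cancel hs, Nat.mod_add_div]

end Z3Monomial

open Z3Monomial in
theorem monomial_Z3_four_mod_six_decomposition_general (m : ℕ) (hmod : m % 6 = 4)
    (t : ℕ) (ht : t = padicValNat 3 (m - 1))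
    (M : ℕ → ℕ → ℕ → Set ℤ_[3])
    (hM : ∀ l a i, M l a i =
      {x : ℤ_[3] | (3 : ℤ_[3]) ^ (t + l + 1) ∣
        x - (1 + 3 ^ (l + 1) * (i : ℤ_[3]) + 3 ^ (l + 2) * (a : ℤ_[3]))}) :
    (∀ l a i l' a' i',
      a < 3 ^ (t - 1) → a' < 3 ^ (t - 1) → (i = 1 ∨ i = 2) → (i' = 1 ∨ i' = 2) →
      (l, a, i) ≠ (l', a', i') → Disjoint (M l a i) (M l' a' i')) ∧
    (∀ l a i, a < 3 ^ (t - 1) → (i = 1 ∨ i = 2) →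
      IsClopen (M l a i) ∧
      (∀ x ∈ M l a i, x ^ m ∈ M l a i) ∧
      (∀ x ∈ M l a i, M l a i ⊆ closure (Set.range fun n : ℕ => x ^ m ^ n))) ∧
    ((⋃ l : ℕ, ⋃ a ∈ Finset.range (3 ^ (t - 1)), ⋃ i ∈ ({1, 2} : Set ℕ), M l a i)
        ∪ {1} = {x : ℤ_[3] | (3 : ℤ_[3]) ∣ x - 1}) ∧
    (∀ x : ℤ_[3], (3 : ℤ_[3]) ∣ x - 2 → (3 : ℤ_[3]) ∣ x ^ m - 1) := by
  have hm1 : m - 1 ≠ 0 := by omega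
  have ht1 : 1 ≤ t := ht ▸ one_le_padicValNat_of_dvd hm1 (by omega)
  obtain ⟨q, hq_eq, hq⟩ := Nat.exists_eq_pow_padicValNat_mul_not_dvd Nat.prime_three hm1
  rw [← ht] at hq_eq
  have hmq : m = 3 ^ t * q + 1 := by omega
  have hdigits {a i : ℕ} := lt_three_pow_and_not_dvd_add_three_mul (a := a) (i := i) ht1
  simp only [hM, setOf_dvd_sub_eq_component]
  refine ⟨fun l a i l' a' i' ha ha' hi hi' hne => ?_, fun l a i ha hi => ⟨isClopen_component,
    fun x => pow_mem_component l.succ_pos (by simp [hmq, Nat.ModEq]), fun x hx => hmq ▸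
      component_subset_closure_orbit l.succ_pos ht1 hq (hdigits ha hi).2 hx⟩,
    iUnion_component_union_one ht1, fun x hx => ?_⟩
  · refine disjoint_component ht1 (hdigits ha hi).2 (hdigits ha' hi').2
      (hdigits ha hi).1 (hdigits ha' hi').1 ?_
    simp only [ne_eq, Prod.mk.injEq] at hne ⊢
    omega
  · refine (Nat.even_iff.2 (by omega)).dvd_pow_sub_one_of_dvd_add_one ?_
    convert dvd_add hx (dvd_refl (3 : ℤ_[3])) using 1
    ring

/-- Minimal decomposition for `x ↦ x^m` on `ℤ_3` with `m ≡ 4 (mod 6)`: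
the sets `M_{l,a,i} = 1 + 3^(l+1)i + 3^(l+2)a + 3^(t+l+1)ℤ_3` are pairwise disjoint
clopen minimal components, together with `{1}` they cover exactly the ball `1 + 3ℤ_3`,
and `f` maps `2 + 3ℤ_3` into `1 + 3ℤ_3`. -/
theorem monomial_Z3_four_mod_six_decomposition (m : ℕ) (hm : 2 ≤ m) (hmod : m % 6 = 4)
    (t : ℕ) (ht : t = padicValNat 3 (m - 1))
    (M : ℕ → ℕ → ℕ → Set ℤ_[3])
    (hM : ∀ l a i, M l a i =
      {x : ℤ_[3] | (3 : ℤ_[3]) ^ (t + l + 1) ∣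
        x - (1 + 3 ^ (l + 1) * (i : ℤ_[3]) + 3 ^ (l + 2) * (a : ℤ_[3]))}) :
    (∀ l a i l' a' i',
      a < 3 ^ (t - 1) → a' < 3 ^ (t - 1) → (i = 1 ∨ i = 2) → (i' = 1 ∨ i' = 2) →
      (l, a, i) ≠ (l', a', i') → Disjoint (M l a i) (M l' a' i')) ∧
    (∀ l a i, a < 3 ^ (t - 1) → (i = 1 ∨ i = 2) →
      IsClopen (M l a i) ∧
      (∀ x ∈ M l a i, x ^ m ∈ M l a i) ∧
      (∀ x ∈ M l a i, M l a i ⊆ closure (Set.range fun n : ℕ => x ^ m ^ n))) ∧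
    ((⋃ l : ℕ, ⋃ a ∈ Finset.range (3 ^ (t - 1)), ⋃ i ∈ ({1, 2} : Set ℕ), M l a i)
        ∪ {1} = {x : ℤ_[3] | (3 : ℤ_[3]) ∣ x - 1}) ∧
    (∀ x : ℤ_[3], (3 : ℤ_[3]) ∣ x - 2 → (3 : ℤ_[3]) ∣ x ^ m - 1) :=
  monomial_Z3_four_mod_six_decomposition_general m hmod t ht M hM
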